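/- Work in the Euclidean plane ℝ² and in ℝ³. Let a and q be distinct points of ℝ² and let R = [x₀, x₁] × [y₀, y₁] be an axis-aligned rectangle with x₀ < x₁ and y₀ < y₁. Let v be a vertex of R, let w and w' be the two vertices of R adjacent to v, and let p be a point on the segment from v to w and p' a point on the segment from v to w', such that dist(p, a) = dist(p, q), dist(p', a) = dist(p', q), dist(v, a) < dist(v, q), dist(w, a) ≥ dist(w, q), and dist(w', a) ≥ dist(w', q). Fix z > 0 and a height h with 0 < h ≤ z, and let T = {(x, y, h) : (x, y) ∈ convexHull {v, p, p'}} ⊆ ℝ³. Then for every u ∈ R, the vertical downward ray {(u₁, u₂, z − t) : t ∈ [0, z]} meets T if and only if dist(u, a) ≤ dist(u, q). -/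

import Mathlib

/-
The function `u ↦ dist u q ² - dist u a ²` is affine (the quadratic terms cancel), so `a` is at
least as close as `q` exactly on a closed half-plane `H` whose boundary is the perpendicular
bisector. The triangle `v p p'` has its vertices in `H`, hence lies in `H`. Conversely the
rectangle lies in the cone at `v` spanned by its two edges; writing `u = v + α (p - v) + β (p' - v)`
with `α, β ≥ 0`, the affine function takes the value `(1 - α - β)` times its positive value at `v`,
so `u ∈ H` forces `α + β ≤ 1`, i.e. `u` lies in the triangle. A vertical ray through `u` reaching
height `h` meets the lifted triangle exactly when `u` lies in the triangle itself.
-/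

noncomputable section

/-- The axis-aligned rectangle `[x₀, x₁] × [y₀, y₁]` in the Euclidean plane. -/
def rect (x₀ x₁ y₀ y₁ : ℝ) : Set (EuclideanSpace ℝ (Fin 2)) :=
  {p | p 0 ∈ Set.Icc x₀ x₁ ∧ p 1 ∈ Set.Icc y₀ y₁}

/-- `v` is a vertex (corner) of the rectangle `[x₀, x₁] × [y₀, y₁]`. -/
def IsVertex (x₀ x₁ y₀ y₁ : ℝ) (v : EuclideanSpace ℝ (Fin 2)) : Prop :=
  (v 0 = x₀ ∨ v 0 = x₁) ∧ (v 1 = y₀ ∨ v 1 = y₁)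

/-- The point of `ℝ³` above a planar point `w`, at height `h`. -/
def lift3 (w : EuclideanSpace ℝ (Fin 2)) (h : ℝ) : EuclideanSpace ℝ (Fin 3) :=
  (WithLp.equiv 2 (Fin 3 → ℝ)).symm ![w 0, w 1, h]

/-- The vertical downward ray of a user `u`, cast from `(u₁, u₂, z)` down to the plane
`z = 0`. -/
def userRay (u : EuclideanSpace ℝ (Fin 2)) (z : ℝ) : Set (EuclideanSpace ℝ (Fin 3)) :=
  {x | ∃ t ∈ Set.Icc (0 : ℝ) z, x = lift3 u (z - t)}

open Set AffineMap

section SqDistDiff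

variable {E : Type*} [NormedAddCommGroup E] [InnerProductSpace ℝ E]

def sqDistDiff (a q : E) : E →ᵃ[ℝ] ℝ where
  toFun u := dist u q ^ 2 - dist u a ^ 2
  linear := innerₛₗ ℝ ((2 : ℝ) • (a - q))
  map_vadd' u x := by
    simp only [vadd_eq_add, dist_eq_norm, add_sub_assoc, norm_add_sq_real, innerₛₗ_apply_apply]
    rw [inner_smul_left, inner_sub_left, inner_sub_right, inner_sub_right]
    simp only [conj_trivial, real_inner_comm x]
    ring

theorem sqDistDiff_apply (a q u : E) : sqDistDiff a q u = dist u q ^ 2 - dist u a ^ 2 := rfl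

theorem dist_le_dist_iff_nonneg_sqDistDiff {a q u : E} :
    dist u a ≤ dist u q ↔ 0 ≤ sqDistDiff a q u := by
  rw [sqDistDiff_apply, sub_nonneg, sq_le_sq₀ dist_nonneg dist_nonneg]

theorem sqDistDiff_pos_of_dist_lt_dist {a q u : E} (h : dist u a < dist u q) :
    0 < sqDistDiff a q u := by
  rw [sqDistDiff_apply, sub_pos]
  gcongr

theorem sqDistDiff_eq_zero_of_dist_eq_dist {a q u : E} (h : dist u a = dist u q) :
    sqDistDiff a q u = 0 := by
  rw [sqDistDiff_apply, h, sub_self]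

end SqDistDiff

section Cone

variable {E : Type*} [AddCommGroup E] [Module ℝ E]

theorem add_smul_sub_add_smul_sub_mem_convexHull {v p p' : E} {α β : ℝ} (hα : 0 ≤ α)
    (hβ : 0 ≤ β) (hαβ : α + β ≤ 1) :
    v + α • (p - v) + β • (p' - v) ∈ convexHull ℝ {v, p, p'} := by
  have hmem : ∀ x ∈ ({v, p, p'} : Set E), x ∈ convexHull ℝ {v, p, p'} :=
    fun x hx => subset_convexHull ℝ _ hx
  have hcomb := (convex_convexHull ℝ {v, p, p'}).sum_mem (t := Finset.univ)
    (w := ![1 - α - β, α, β]) (z := ![v, p, p'])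
    (by simp [Fin.forall_fin_succ]; grind) (by simp [Fin.sum_univ_three]; ring)
    (by simp [Fin.forall_fin_succ, hmem])
  convert hcomb using 1
  simp only [Fin.sum_univ_three, Matrix.cons_val_zero, Matrix.cons_val_one, Matrix.cons_val_two,
    Matrix.head_cons, Matrix.tail_cons, smul_sub, sub_smul, one_smul]
  abel

theorem mem_convexHull_lineMap_of_affineMap_nonneg (f : E →ᵃ[ℝ] ℝ) {v w w' : E} {b c s t : ℝ}
    (hb : 0 ≤ b) (hc : 0 ≤ c) (hv : 0 < f v) (hp : f (lineMap v w b) = 0)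
    (hp' : f (lineMap v w' c) = 0) (hs : 0 ≤ s) (ht : 0 ≤ t)
    (hu : 0 ≤ f (v + s • (w - v) + t • (w' - v))) :
    v + s • (w - v) + t • (w' - v) ∈ convexHull ℝ {v, lineMap v w b, lineMap v w' c} := by
  rw [apply_lineMap, lineMap_apply_ring'] at hp hp'
  have hb0 : 0 < b := hb.lt_of_ne (by rintro rfl; linarith)
  have hc0 : 0 < c := hc.lt_of_ne (by rintro rfl; linarith)
  have hexp : f (v + s • (w - v) + t • (w' - v)) = f v + s * (f w - f v) + t * (f w' - f v) := by
    rw [f.decomp]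
    simp only [Pi.add_apply, map_add, map_smul, map_sub, smul_eq_mul]
    ring
  have hfu : f (v + s • (w - v) + t • (w' - v)) = (1 - s / b - t / c) * f v := by
    rw [hexp]
    field_simp
    linear_combination (s * c) * hp + (t * b) * hp'
  have hst : s / b + t / c ≤ 1 := by
    rw [hfu] at hu
    nlinarith [div_nonneg hs hb, div_nonneg ht hc]
  convert add_smul_sub_add_smul_sub_mem_convexHull (v := v) (p := lineMap v w b)
    (p' := lineMap v w' c) (div_nonneg hs hb) (div_nonneg ht hc) hst using 2
  · rw [lineMap_apply_module', add_sub_cancel_right, smul_smul, div_mul_cancel₀ _ hb0.ne']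
  · rw [lineMap_apply_module', add_sub_cancel_right, smul_smul, div_mul_cancel₀ _ hc0.ne']

end Cone

-- For `c = d` the quotient is `0` by the convention `x / 0 = 0`.
theorem sub_div_sub_nonneg_of_mem_Icc {x₀ x₁ c d t : ℝ} (hc : c = x₀ ∨ c = x₁)
    (hd : d = x₀ ∨ d = x₁) (ht : t ∈ Icc x₀ x₁) : 0 ≤ (t - c) / (d - c) := by
  obtain ⟨ht₀, ht₁⟩ := ht
  rcases hc with rfl | rfl <;> rcases hd with rfl | rfl
  · simp
  · exact div_nonneg (by linarith) (by linarith)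
  · exact div_nonneg_of_nonpos (by linarith) (by linarith)
  · simp

theorem exists_eq_add_smul_add_smul_of_mem_rect {x₀ x₁ y₀ y₁ : ℝ}
    {u v w w' : EuclideanSpace ℝ (Fin 2)} (hu : u ∈ rect x₀ x₁ y₀ y₁)
    (hv : IsVertex x₀ x₁ y₀ y₁ v) (hw : IsVertex x₀ x₁ y₀ y₁ w) (hwv : w ≠ v)
    (hwadj : w 1 = v 1) (hw' : IsVertex x₀ x₁ y₀ y₁ w') (hw'v : w' ≠ v) (hw'adj : w' 0 = v 0) :
    ∃ s t : ℝ, 0 ≤ s ∧ 0 ≤ t ∧ u = v + s • (w - v) + t • (w' - v) := by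
  have hw0 : w 0 - v 0 ≠ 0 :=
    sub_ne_zero.2 fun h => hwv (by ext i; fin_cases i <;> simp [h, hwadj])
  have hw'1 : w' 1 - v 1 ≠ 0 :=
    sub_ne_zero.2 fun h => hw'v (by ext i; fin_cases i <;> simp [h, hw'adj])
  refine ⟨(u 0 - v 0) / (w 0 - v 0), (u 1 - v 1) / (w' 1 - v 1),
    sub_div_sub_nonneg_of_mem_Icc hv.1 hw.1 hu.1, sub_div_sub_nonneg_of_mem_Icc hv.2 hw'.2 hu.2, ?_⟩
  ext i
  fin_cases i <;> simp [hwadj, hw'adj, div_mul_cancel₀ _ hw0, div_mul_cancel₀ _ hw'1]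

theorem userRay_inter_image_lift3_nonempty_iff {u : EuclideanSpace ℝ (Fin 2)} {z h : ℝ}
    (hh0 : 0 ≤ h) (hhz : h ≤ z) (S : Set (EuclideanSpace ℝ (Fin 2))) :
    (userRay u z ∩ (fun s => lift3 s h) '' S).Nonempty ↔ u ∈ S := by
  constructor
  · rintro ⟨_, ⟨t, -, rfl⟩, s, hs, hsu⟩
    convert hs
    ext i
    fin_cases i
    · exact (congrArg (· 0) hsu).symm
    · exact (congrArg (· 1) hsu).symm
  · intro hu
    exact ⟨lift3 u h, ⟨z - h, ⟨sub_nonneg.2 hhz, sub_le_self z hh0⟩, by rw [sub_sub_cancel]⟩,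
      u, hu, rfl⟩

theorem stmt_3_general (a q : EuclideanSpace ℝ (Fin 2))
    (x₀ x₁ y₀ y₁ : ℝ)
    (v w w' p p' : EuclideanSpace ℝ (Fin 2))
    (hv : IsVertex x₀ x₁ y₀ y₁ v)
    (hw : IsVertex x₀ x₁ y₀ y₁ w) (hwv : w ≠ v) (hwadj : w 1 = v 1)
    (hw' : IsVertex x₀ x₁ y₀ y₁ w') (hw'v : w' ≠ v) (hw'adj : w' 0 = v 0)
    (hp : p ∈ segment ℝ v w) (hpbis : dist p a = dist p q)
    (hp' : p' ∈ segment ℝ v w') (hp'bis : dist p' a = dist p' q)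
    (hva : dist v a < dist v q)
    (z : ℝ) (h : ℝ) (hh0 : 0 < h) (hhz : h ≤ z) :
    ∀ u ∈ rect x₀ x₁ y₀ y₁,
      (userRay u z ∩ ((fun s => lift3 s h) '' convexHull ℝ {v, p, p'})).Nonempty ↔
        dist u a ≤ dist u q := by
  intro u hu
  rw [userRay_inter_image_lift3_nonempty_iff hh0.le hhz, dist_le_dist_iff_nonneg_sqDistDiff]
  have hpf := sqDistDiff_eq_zero_of_dist_eq_dist hpbis
  have hp'f := sqDistDiff_eq_zero_of_dist_eq_dist hp'bis
  have hvf := sqDistDiff_pos_of_dist_lt_dist hva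
  constructor
  · intro hmem
    refine convexHull_min ?_ ((convex_Ici 0).affine_preimage (sqDistDiff a q)) hmem
    rintro x (rfl | rfl | rfl) <;> simp [hvf.le, hpf, hp'f]
  · intro hfu
    rw [segment_eq_image_lineMap] at hp hp'
    obtain ⟨b, ⟨hb, -⟩, rfl⟩ := hp
    obtain ⟨c, ⟨hc, -⟩, rfl⟩ := hp'
    obtain ⟨s, t, hs, ht, rfl⟩ :=
      exists_eq_add_smul_add_smul_of_mem_rect hu hv hw hwv hwadj hw' hw'v hw'adj
    exact mem_convexHull_lineMap_of_affineMap_nonneg _ hb hc hvf hpf hp'f hs ht hfu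

/-- Single-facility-pair correctness of the occluder construction (normal case): the
lifted triangle with vertices `v` and the two bisector–edge crossing points is hit by
the vertical ray of a user `u ∈ R` exactly when `a` is at least as close to `u` as
`q` is. -/
theorem stmt_3 (a q : EuclideanSpace ℝ (Fin 2)) (haq : a ≠ q)
    (x₀ x₁ y₀ y₁ : ℝ) (hx : x₀ < x₁) (hy : y₀ < y₁)
    (v w w' p p' : EuclideanSpace ℝ (Fin 2))
    (hv : IsVertex x₀ x₁ y₀ y₁ v)
    (hw : IsVertex x₀ x₁ y₀ y₁ w) (hwv : w ≠ v) (hwadj : w 1 = v 1)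
    (hw' : IsVertex x₀ x₁ y₀ y₁ w') (hw'v : w' ≠ v) (hw'adj : w' 0 = v 0)
    (hp : p ∈ segment ℝ v w) (hpbis : dist p a = dist p q)
    (hp' : p' ∈ segment ℝ v w') (hp'bis : dist p' a = dist p' q)
    (hva : dist v a < dist v q)
    (hwa : dist w q ≤ dist w a) (hw'a : dist w' q ≤ dist w' a)
    (z : ℝ) (hz : 0 < z) (h : ℝ) (hh0 : 0 < h) (hhz : h ≤ z) :
    ∀ u ∈ rect x₀ x₁ y₀ y₁,
      (userRay u z ∩ ((fun s => lift3 s h) '' convexHull ℝ {v, p, p'})).Nonempty ↔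
        dist u a ≤ dist u q :=
  stmt_3_general a q x₀ x₁ y₀ y₁ v w w' p p' hv hw hwv hwadj hw' hw'v hw'adj hp hpbis hp' hp'bis hva
    z h hh0 hhz

end
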